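/- arXiv:2411.16141 — 6 statements merged into one kernel-verified Lean document; each statement's English description precedes it below -/
import Mathlib

section
/- Let r ≥ 1 and N ≥ 0 be integers, let χ, χ₁, …, χ_N ∈ ℤ^r, and let S ⊆ {1,…,N}. Suppose the set C_S = { λ ∈ ℤ^r : λ ≠ 0 and ⟨λ, χᵢ⟩ ≥ 0 for all i ∈ S } is nonempty. Then the infimum over λ ∈ C_S of the normalized value ⟨λ, χ⟩ / ‖λ‖ is attained: there exists λ_min ∈ C_S such that ⟨λ_min, χ⟩ / ‖λ_min‖ ≤ ⟨λ, χ⟩ / ‖λ‖ for all λ ∈ C_S. -/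
open Finset Filter InnerProductSpace

noncomputable section HMaux

def Qf : Subfield ℝ := (algebraMap ℚ ℝ).fieldRange
abbrev Vr (r : ℕ) := EuclideanSpace ℝ (Fin r)
def ratVec {r : ℕ} (v : Vr r) : Prop := ∀ j, v j ∈ Qf

lemma inner_ratR {r : ℕ} {v w : Vr r} (hv : ratVec v) (hw : ratVec w) :
    (inner ℝ v w : ℝ) ∈ Qf := by
  rw [PiLp.inner_apply]
  exact Subfield.sum_mem _ fun j _ => by
    simpa [mul_comm] using Subfield.mul_mem _ (hv j) (hw j)

lemma ratVec_sub {r : ℕ} {v w : Vr r} (hv : ratVec v) (hw : ratVec w) : ratVec (v - w) :=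
  fun j => by simpa using Subfield.sub_mem _ (hv j) (hw j)

lemma ratVec_smul {r : ℕ} {t : ℝ} {v : Vr r} (ht : t ∈ Qf) (hv : ratVec v) :
    ratVec (t • v) := fun j => by simpa using Subfield.mul_mem _ ht (hv j)

lemma ratVec_sum {r : ℕ} {ι : Type*} (s : Finset ι) (f : ι → Vr r)
    (hf : ∀ i ∈ s, ratVec (f i)) : ratVec (∑ i ∈ s, f i) := by
  intro j
  have : (∑ i ∈ s, f i) j = ∑ i ∈ s, f i j := by simp
  rw [this]
  exact Subfield.sum_mem _ fun i hi => hf i hi j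

section Gen
variable {E : Type*} [NormedAddCommGroup E] [InnerProductSpace ℝ E]

lemma orth_span_iff (a : ℕ → E) (x : E) :
    (∀ i, (inner ℝ (a i) x : ℝ) = 0) ↔ x ∈ (Submodule.span ℝ (Set.range a))ᗮ := by
  constructor
  · intro h
    rw [Submodule.mem_orthogonal]
    intro u hu
    induction hu using Submodule.span_induction with
    | mem y hy => obtain ⟨i, rfl⟩ := hy; exact h i
    | zero => simp
    | add y z _ _ hy hz => rw [inner_add_left, hy, hz, add_zero]
    | smul t y _ hy => rw [inner_smul_left, hy, mul_zero]
  · intro h i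
    exact (Submodule.mem_orthogonal _ _).mp h _
      (Submodule.subset_span (Set.mem_range_self i))

lemma gramSchmidt_eq_zero_of_zero (f : ℕ → E) (n : ℕ) (hf : f n = 0) :
    gramSchmidt ℝ f n = 0 := by
  rw [gramSchmidt_def, hf]
  simp

def projC (a : ℕ → E) (m : ℕ) (x : E) : E :=
  x - ∑ i ∈ Finset.range m, ((inner ℝ (a i) x : ℝ) / (inner ℝ (a i) (a i) : ℝ)) • a i

lemma projC_orth (a : ℕ → E) (m : ℕ)
    (horth : ∀ i j, i ≠ j → (inner ℝ (a i) (a j) : ℝ) = 0) (x : E) :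
    ∀ j, j < m → (inner ℝ (a j) (projC a m x) : ℝ) = 0 := by
  intro j hj
  rw [projC, inner_sub_right, inner_sum]
  rw [Finset.sum_eq_single j]
  · rw [real_inner_smul_right]
    by_cases h : (inner ℝ (a j) (a j) : ℝ) = 0
    · have : a j = 0 := by rwa [inner_self_eq_zero] at h
      simp [this]
    · field_simp
      simp
  · intro i _ hij
    rw [real_inner_smul_right, horth j i (Ne.symm hij), mul_zero]
  · intro h
    exact absurd (Finset.mem_range.mpr hj) h

lemma projC_fix (a : ℕ → E) (m : ℕ) (x : E)
    (h : ∀ i, i < m → (inner ℝ (a i) x : ℝ) = 0) : projC a m x = x := by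
  rw [projC]
  have : ∀ i ∈ Finset.range m, ((inner ℝ (a i) x : ℝ) / (inner ℝ (a i) (a i) : ℝ)) • a i = 0 := by
    intro i hi
    rw [h i (Finset.mem_range.mp hi), zero_div, zero_smul]
  rw [Finset.sum_congr rfl this]
  simp

lemma projC_cont (a : ℕ → E) (m : ℕ) : Continuous (projC a m) := by
  unfold projC
  refine continuous_id.sub (continuous_finset_sum _ fun i _ => ?_)
  exact (((continuous_const.inner continuous_id).div_const _).smul continuous_const)

lemma norm_add_smul_eq (v u : E) (hv : ‖v‖ = 1) (t : ℝ) :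
    ‖v + t • u‖ = Real.sqrt (1 + 2 * t * (inner ℝ v u : ℝ) + t ^ 2 * ‖u‖ ^ 2) := by
  have h1 : (inner ℝ (v + t • u) (v + t • u) : ℝ) =
      1 + 2 * t * (inner ℝ v u : ℝ) + t ^ 2 * ‖u‖ ^ 2 := by
    rw [real_inner_add_add_self, real_inner_smul_right, real_inner_smul_left,
      real_inner_smul_right, real_inner_self_eq_norm_sq, real_inner_self_eq_norm_sq, hv]
    ring
  rw [← h1, real_inner_self_eq_norm_sq, Real.sqrt_sq (norm_nonneg _)]

lemma lagrange_aux (c v u : E) (μ : ℝ) (hv : ‖v‖ = 1)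
    (h : ∀ᶠ t in nhds (0 : ℝ), μ * ‖v + t • u‖ ≤ μ + t * (inner ℝ c u : ℝ)) :
    (inner ℝ c u : ℝ) = μ * (inner ℝ v u : ℝ) := by
  set s : ℝ := (inner ℝ v u : ℝ)
  set n : ℝ := ‖u‖ ^ 2
  set ψ : ℝ → ℝ := fun t => μ * Real.sqrt (1 + 2 * t * s + t ^ 2 * n) - (μ + t * (inner ℝ c u : ℝ))
    with hψ
  have hψ0 : ψ 0 = 0 := by simp [hψ]
  have hmax : IsLocalMax ψ 0 := by
    rw [IsLocalMax, IsMaxFilter, hψ0]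
    filter_upwards [h] with t ht
    rw [hψ]
    simp only
    rw [← norm_add_smul_eq v u hv t]
    linarith
  have hg : HasDerivAt (fun t : ℝ => 1 + 2 * t * s + t ^ 2 * n) (2 * s) 0 := by
    have h1 : HasDerivAt (fun t : ℝ => 2 * t * s) (2 * s) 0 := by
      simpa using ((hasDerivAt_id (0:ℝ)).const_mul 2).mul_const s
    have h2 : HasDerivAt (fun t : ℝ => t ^ 2 * n) 0 0 := by
      simpa using ((hasDerivAt_pow 2 (0:ℝ))).mul_const n
    have := (h1.const_add 1).add h2
    rw [add_zero] at this
    exact this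
  have hsq : HasDerivAt (fun t : ℝ => Real.sqrt (1 + 2 * t * s + t ^ 2 * n)) s 0 := by
    have h0 : (1 : ℝ) + 2 * 0 * s + 0 ^ 2 * n ≠ 0 := by norm_num
    have := (Real.hasDerivAt_sqrt h0).comp 0 hg
    rw [show (1 / (2 * √(1 + 2 * 0 * s + 0 ^ 2 * n)) * (2 * s)) = s by norm_num; ring] at this
    exact this
  have hlin : HasDerivAt (fun t : ℝ => μ + t * (inner ℝ c u : ℝ)) (inner ℝ c u : ℝ) 0 := by
    simpa using ((hasDerivAt_id (0:ℝ)).mul_const (inner ℝ c u : ℝ)).const_add μ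
  have hd : HasDerivAt ψ (μ * s - (inner ℝ c u : ℝ)) 0 := (hsq.const_mul μ).sub hlin
  have := hmax.hasDerivAt_eq_zero hd
  linarith

end Gen

lemma gramSchmidt_ratVec {r : ℕ} (f : ℕ → Vr r) (hf : ∀ n, ratVec (f n)) :
    ∀ n, ratVec (gramSchmidt ℝ f n) := by
  intro n
  induction n using Nat.strong_induction_on with
  | _ n ih =>
    have hdef := gramSchmidt_def'' ℝ f n
    rw [RCLike.ofReal_real_eq_id] at hdef
    simp only [id] at hdef
    have : gramSchmidt ℝ f n = f n - ∑ i ∈ Finset.Iio n,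
        ((inner ℝ (gramSchmidt ℝ f i) (f n) : ℝ) / ‖gramSchmidt ℝ f i‖ ^ 2) •
          gramSchmidt ℝ f i := by
      rw [eq_sub_iff_add_eq]; exact hdef.symm
    rw [this]
    refine ratVec_sub (hf n) (ratVec_sum _ _ fun i hi => ?_)
    have hgi := ih i (Finset.mem_Iio.mp hi)
    refine ratVec_smul (Subfield.div_mem _ (inner_ratR hgi (hf n)) ?_) hgi
    have : ‖gramSchmidt ℝ f i‖ ^ 2 = inner ℝ (gramSchmidt ℝ f i) (gramSchmidt ℝ f i) :=
      (real_inner_self_eq_norm_sq _).symm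
    rw [this]
    exact inner_ratR hgi hgi

lemma projC_rat {r : ℕ} (a : ℕ → Vr r) (m : ℕ) (ha : ∀ k, ratVec (a k))
    {x : Vr r} (hx : ratVec x) : ratVec (projC a m x) := by
  refine ratVec_sub hx (ratVec_sum _ _ fun i _ => ?_)
  exact ratVec_smul (Subfield.div_mem _ (inner_ratR (ha i) hx) (inner_ratR (ha i) (ha i))) (ha i)

lemma exists_ratVec_near {r : ℕ} (v : Vr r) {ε : ℝ} (hε : 0 < ε) :
    ∃ w : Vr r, ratVec w ∧ ‖w - v‖ < ε := by
  set ε' : ℝ := ε / (Real.sqrt r + 1) with hε'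
  have hsr : 0 ≤ Real.sqrt r := Real.sqrt_nonneg _
  have hε'pos : 0 < ε' := div_pos hε (by linarith)
  have H : ∀ j : Fin r, ∃ q : ℚ, |v j - (q : ℝ)| < ε' := fun j => by
    obtain ⟨q, hq⟩ := exists_rat_near (v j) hε'pos
    exact ⟨q, hq⟩
  choose q hq using H
  refine ⟨(show Vr r from WithLp.toLp 2 fun j => ((q j : ℝ))), fun j => ⟨q j, rfl⟩, ?_⟩
  have hnorm : ‖(show Vr r from WithLp.toLp 2 fun j => ((q j : ℝ))) - v‖ =
      Real.sqrt (∑ j, ((q j : ℝ) - v j) ^ 2) := by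
    rw [EuclideanSpace.norm_eq]
    congr 1
    refine Finset.sum_congr rfl fun j _ => ?_
    rw [Real.norm_eq_abs, sq_abs]
    rfl
  rw [hnorm]
  have hbound : (∑ j, ((q j : ℝ) - v j) ^ 2) ≤ r * ε' ^ 2 := by
    calc (∑ j, ((q j : ℝ) - v j) ^ 2) ≤ ∑ _j : Fin r, ε' ^ 2 := by
          refine Finset.sum_le_sum fun j _ => ?_
          have := hq j
          have h1 : |(q j : ℝ) - v j| < ε' := by rwa [abs_sub_comm] at this
          nlinarith [abs_nonneg ((q j : ℝ) - v j), sq_abs ((q j : ℝ) - v j),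
            sq_nonneg (|(q j : ℝ) - v j| - ε')]
      _ = r * ε' ^ 2 := by simp [mul_comm]
  calc Real.sqrt (∑ j, ((q j : ℝ) - v j) ^ 2) ≤ Real.sqrt (r * ε' ^ 2) :=
        Real.sqrt_le_sqrt hbound
    _ = Real.sqrt r * ε' := by
        rw [Real.sqrt_mul (Nat.cast_nonneg r), Real.sqrt_sq hε'pos.le]
    _ < ε := by
        rw [hε']
        rw [div_eq_iff (by linarith : Real.sqrt r + 1 ≠ 0)] at *
        nlinarith [hε'pos]

lemma rat_int_clear (q : ℚ) (d : ℕ) (hd : q.den ∣ d) : ((q * d).num : ℚ) = q * d := by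
  obtain ⟨k, hk⟩ := hd
  have hden : ((q.den : ℚ)) ≠ 0 := by exact_mod_cast q.den_nz
  have hqd : (q : ℚ) * (q.den : ℚ) = (q.num : ℚ) := by
    have h := Rat.num_div_den q
    rw [div_eq_iff hden] at h
    exact h.symm
  have : (q * d : ℚ) = ((q.num * k : ℤ) : ℚ) := by
    rw [hk]
    push_cast
    rw [← mul_assoc, hqd]
  rw [this, Rat.num_intCast]

lemma exists_int_multiple {r : ℕ} (w : Vr r) (hw : ratVec w) :
    ∃ (l : Fin r → ℤ) (d : ℝ), 0 < d ∧ ∀ j, (l j : ℝ) = d * w j := by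
  choose q hq using hw
  set d : ℕ := ∏ j, (q j).den with hd
  have hdpos : 0 < d := Finset.prod_pos fun j _ => (q j).pos
  refine ⟨fun j => (q j * d).num, d, by exact_mod_cast hdpos, fun j => ?_⟩
  have h1 : ((q j * d).num : ℚ) = q j * d :=
    rat_int_clear _ _ (Finset.dvd_prod_of_mem (fun j => (q j).den) (Finset.mem_univ j))
  have h2 : ((q j : ℝ)) = w j := hq j
  calc ((q j * d).num : ℝ) = (((q j * d).num : ℚ) : ℝ) := by push_cast; ring
    _ = ((q j * d : ℚ) : ℝ) := by rw [h1]
    _ = d * w j := by push_cast [← h2]; ring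

end HMaux

/-- **Attainment of the minimum of the normalized Hilbert–Mumford function.**
Let `r ≥ 1` and `N ≥ 0`, let `χ, χ₁, …, χ_N ∈ ℤ^r` and `S ⊆ {1,…,N}`.  If the set
`C_S = {λ ∈ ℤ^r : λ ≠ 0 and ⟨λ, χᵢ⟩ ≥ 0 for all i ∈ S}` is nonempty, then there is a
`λ_min ∈ C_S` minimizing `⟨λ, χ⟩ / ‖λ‖` over `C_S`. -/
theorem normalized_HM_min_attained
    (r N : ℕ) (hr : 1 ≤ r) (χ : Fin r → ℤ) (χs : Fin N → Fin r → ℤ)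
    (S : Finset (Fin N)) (C : Set (Fin r → ℤ))
    (hC : C = {l : Fin r → ℤ | l ≠ 0 ∧ ∀ i ∈ S, 0 ≤ ∑ j, l j * χs i j})
    (hne : C.Nonempty) :
    ∃ lmin ∈ C, ∀ l ∈ C,
      ((∑ j, lmin j * χ j : ℤ) : ℝ) / Real.sqrt (∑ j, ((lmin j : ℝ)) ^ 2) ≤
        ((∑ j, l j * χ j : ℤ) : ℝ) / Real.sqrt (∑ j, ((l j : ℝ)) ^ 2) := by
  classical
  subst hC
  set iv : (Fin r → ℤ) → Vr r := fun l => (show Vr r from WithLp.toLp 2 fun j => (l j : ℝ)) with hiv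
  have hiv_apply : ∀ (l : Fin r → ℤ) (j : Fin r), iv l j = (l j : ℝ) := fun l j => rfl
  set c : Vr r := iv χ with hcdef
  set cs : Fin N → Vr r := fun i => iv (χs i) with hcsdef
  have hc_rat : ratVec c := fun j => ⟨(χ j : ℚ), by push_cast [hiv_apply]; rfl⟩
  have hcs_rat : ∀ i, ratVec (cs i) := fun i j => ⟨(χs i j : ℚ), by push_cast [hiv_apply]; rfl⟩
  have hinner : ∀ (g l : Fin r → ℤ), (inner ℝ (iv g) (iv l) : ℝ) = ((∑ j, l j * g j : ℤ) : ℝ) := by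
    intro g l
    rw [PiLp.inner_apply]
    push_cast
    exact Finset.sum_congr rfl fun j _ => by simp [hiv_apply]
  have hnorm : ∀ l : Fin r → ℤ, ‖iv l‖ = Real.sqrt (∑ j, ((l j : ℝ)) ^ 2) := by
    intro l
    rw [EuclideanSpace.norm_eq]
    congr 1
    exact Finset.sum_congr rfl fun j _ => by rw [hiv_apply, Real.norm_eq_abs, sq_abs]
  set K : Set (Vr r) := {v | ∀ i ∈ S, 0 ≤ (inner ℝ (cs i) v : ℝ)} with hKdef
  have hCK : ∀ l, l ∈ {l : Fin r → ℤ | l ≠ 0 ∧ ∀ i ∈ S, 0 ≤ ∑ j, l j * χs i j} →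
      iv l ∈ K ∧ iv l ≠ 0 := by
    intro l hl
    constructor
    · intro i hi
      rw [hinner (χs i) l]
      exact_mod_cast hl.2 i hi
    · intro h
      refine hl.1 (funext fun j => ?_)
      have : iv l j = 0 := by rw [h]; rfl
      rw [hiv_apply] at this
      simpa using this
  have hKclosed : IsClosed K := by
    have : K = ⋂ i ∈ S, {v : Vr r | 0 ≤ (inner ℝ (cs i) v : ℝ)} := by
      ext v
      simp [hKdef, Set.mem_iInter]
    rw [this]
    exact isClosed_biInter fun i _ =>
      isClosed_le continuous_const (continuous_const.inner continuous_id)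
  set Sph : Set (Vr r) := {v | ‖v‖ = 1 ∧ v ∈ K} with hSphdef
  have hSphcompact : IsCompact Sph := by
    have : Sph = Metric.sphere (0 : Vr r) 1 ∩ K := by
      ext v
      simp [hSphdef, mem_sphere_zero_iff_norm]
    rw [this]
    exact (isCompact_sphere 0 1).inter_right hKclosed
  obtain ⟨l₀, hl₀⟩ := hne
  have hl₀K := hCK l₀ hl₀
  have hl₀pos : 0 < ‖iv l₀‖ := norm_pos_iff.mpr hl₀K.2
  have hSphne : Sph.Nonempty := by
    refine ⟨‖iv l₀‖⁻¹ • iv l₀, ?_, ?_⟩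
    · rw [norm_smul, Real.norm_eq_abs, abs_inv, abs_of_pos hl₀pos,
        inv_mul_cancel₀ hl₀pos.ne']
    · intro i hi
      rw [real_inner_smul_right]
      exact mul_nonneg (inv_nonneg.mpr hl₀pos.le) (hl₀K.1 i hi)
  obtain ⟨vs, hvsS, hmin'⟩ := hSphcompact.exists_isMinOn hSphne
    ((continuous_const.inner continuous_id).continuousOn (f := fun v : Vr r => (inner ℝ c v : ℝ)))
  have hmin : ∀ v ∈ Sph, (inner ℝ c vs : ℝ) ≤ (inner ℝ c v : ℝ) := fun v hv => hmin' hv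
  set μ : ℝ := inner ℝ c vs with hμdef
  have hvs_norm : ‖vs‖ = 1 := hvsS.1
  have hvs_K : vs ∈ K := hvsS.2
  have hvs_ne : vs ≠ 0 := fun h => by simp [h] at hvs_norm
  have hcone : ∀ w, w ∈ K → w ≠ 0 → μ * ‖w‖ ≤ (inner ℝ c w : ℝ) := by
    intro w hwK hwne
    have hwpos : 0 < ‖w‖ := norm_pos_iff.mpr hwne
    have hw' : (‖w‖⁻¹ • w) ∈ Sph := by
      refine ⟨?_, ?_⟩
      · rw [norm_smul, Real.norm_eq_abs, abs_inv, abs_of_pos hwpos, inv_mul_cancel₀ hwpos.ne']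
      · intro i hi
        rw [real_inner_smul_right]
        exact mul_nonneg (inv_nonneg.mpr hwpos.le) (hwK i hi)
    have := hmin _ hw'
    rw [real_inner_smul_right] at this
    calc μ * ‖w‖ ≤ (‖w‖⁻¹ * (inner ℝ c w : ℝ)) * ‖w‖ := by
          exact mul_le_mul_of_nonneg_right this hwpos.le
      _ = (inner ℝ c w : ℝ) := by field_simp
  -- the active set and the Gram-Schmidt basis of its span
  set A : Finset (Fin N) := S.filter (fun i => (inner ℝ (cs i) vs : ℝ) = 0) with hAdef
  have hstrict : ∀ i ∈ S, i ∉ A → 0 < (inner ℝ (cs i) vs : ℝ) := by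
    intro i hi hiA
    rcases lt_or_eq_of_le (hvs_K i hi) with h | h
    · exact h
    · exact absurd (Finset.mem_filter.mpr ⟨hi, h.symm⟩) hiA
  set listA : List (Fin N) := A.toList with hlistA
  set m : ℕ := listA.length with hm
  set fA : ℕ → Vr r := fun k => if h : k < m then cs (listA.get ⟨k, h⟩) else 0 with hfAdef
  have hfA_rat : ∀ k, ratVec (fA k) := by
    intro k
    rw [hfAdef]
    by_cases h : k < m
    · simp only [dif_pos h]
      exact hcs_rat _
    · simp only [dif_neg h]
      intro j
      exact ⟨0, by simp⟩
  have hfA_mem : ∀ i ∈ A, ∃ k, fA k = cs i := by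
    intro i hi
    have : i ∈ listA := by rw [hlistA]; exact Finset.mem_toList.mpr hi
    obtain ⟨n, hn⟩ := List.mem_iff_get.mp this
    exact ⟨n.1, by rw [hfAdef]; simp only [dif_pos (show n.1 < m from n.2)]; exact congrArg cs hn⟩
  have hfA_range : ∀ k, fA k = 0 ∨ ∃ i ∈ A, fA k = cs i := by
    intro k
    rw [hfAdef]
    by_cases h : k < m
    · right
      refine ⟨listA.get ⟨k, h⟩, ?_, by simp only [dif_pos h]⟩
      rw [← Finset.mem_toList]
      exact List.get_mem listA ⟨k, h⟩
    · left; simp only [dif_neg h]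
  set a : ℕ → Vr r := gramSchmidt ℝ fA with hadef
  have ha_rat : ∀ k, ratVec (a k) := gramSchmidt_ratVec fA hfA_rat
  have ha_orth : ∀ i j, i ≠ j → (inner ℝ (a i) (a j) : ℝ) = 0 := fun i j h =>
    gramSchmidt_orthogonal ℝ fA h
  have ha_zero : ∀ k, m ≤ k → a k = 0 := by
    intro k hk
    exact gramSchmidt_eq_zero_of_zero fA k (by rw [hfAdef]; simp [not_lt.mpr hk])
  set Lmem : Vr r → Prop := fun x => ∀ i ∈ A, (inner ℝ (cs i) x : ℝ) = 0 with hLdef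
  have claim1 : ∀ x, (∀ k, (inner ℝ (a k) x : ℝ) = 0) ↔ Lmem x := by
    intro x
    rw [hLdef]
    simp only
    rw [orth_span_iff a x, hadef, span_gramSchmidt, ← orth_span_iff fA x]
    constructor
    · intro h i hi
      obtain ⟨k, hk⟩ := hfA_mem i hi
      rw [← hk]
      exact h k
    · intro h k
      rcases hfA_range k with h0 | ⟨i, hi, hk⟩
      · rw [h0, inner_zero_left]
      · rw [hk]
        exact h i hi
  set P : Vr r → Vr r := projC a m with hPdef
  have hP_L : ∀ x, Lmem (P x) := by
    intro x
    refine (claim1 _).mp fun k => ?_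
    by_cases h : k < m
    · exact projC_orth a m ha_orth x k h
    · rw [ha_zero k (Nat.le_of_not_gt h), inner_zero_left]
  have hP_fix : ∀ x, Lmem x → P x = x := fun x hx =>
    projC_fix a m x fun i _ => ((claim1 x).mpr hx) i
  have hP_rat : ∀ x, ratVec x → ratVec (P x) := fun x hx => projC_rat a m ha_rat hx
  have hP_perp : ∀ x u, Lmem u → (inner ℝ (x - P x) u : ℝ) = 0 := by
    intro x u hu
    have : x - P x = ∑ i ∈ Finset.range m,
        ((inner ℝ (a i) x : ℝ) / (inner ℝ (a i) (a i) : ℝ)) • a i := by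
      rw [hPdef]; unfold projC; abel
    rw [this, sum_inner]
    refine Finset.sum_eq_zero fun i _ => ?_
    rw [real_inner_smul_left, ((claim1 u).mpr hu) i, mul_zero]
  have hvs_L : Lmem vs := fun i hi => (Finset.mem_filter.mp hi).2
  have hLsub : ∀ x y, Lmem x → Lmem y → Lmem (x - y) := by
    intro x y hx hy i hi
    rw [inner_sub_right, hx i hi, hy i hi, sub_zero]
  have hLsmul : ∀ (t : ℝ) x, Lmem x → Lmem (t • x) := by
    intro t x hx i hi
    rw [real_inner_smul_right, hx i hi, mul_zero]
  -- openness of the strict region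
  have hUopen : IsOpen {w : Vr r | (∀ i ∈ S, i ∉ A → 0 < (inner ℝ (cs i) w : ℝ)) ∧ w ≠ 0} := by
    have h1 : IsOpen {w : Vr r | ∀ i ∈ S, i ∉ A → 0 < (inner ℝ (cs i) w : ℝ)} := by
      have : {w : Vr r | ∀ i ∈ S, i ∉ A → 0 < (inner ℝ (cs i) w : ℝ)} =
          ⋂ i ∈ (S.filter (· ∉ A)), {w : Vr r | 0 < (inner ℝ (cs i) w : ℝ)} := by
        ext w
        simp only [Set.mem_iInter, Finset.mem_filter, Set.mem_setOf_eq]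
        tauto
      rw [this]
      exact isOpen_biInter_finset fun i _ =>
        isOpen_lt continuous_const (continuous_const.inner continuous_id)
    exact h1.inter isOpen_compl_singleton
  have hvs_U : vs ∈ {w : Vr r | (∀ i ∈ S, i ∉ A → 0 < (inner ℝ (cs i) w : ℝ)) ∧ w ≠ 0} :=
    ⟨hstrict, hvs_ne⟩
  have hUK : ∀ w, (∀ i ∈ S, i ∉ A → 0 < (inner ℝ (cs i) w : ℝ)) → Lmem w → w ∈ K := by
    intro w hw hLw i hi
    by_cases h : i ∈ A
    · rw [hLw i h]
    · exact (hw i hi h).le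
  -- Lagrange multipliers
  have hLag : ∀ u, Lmem u → (inner ℝ c u : ℝ) = μ * (inner ℝ vs u : ℝ) := by
    intro u hu
    refine lagrange_aux c vs u μ hvs_norm ?_
    have htend : Filter.Tendsto (fun t : ℝ => vs + t • u) (nhds 0) (nhds vs) := by
      have : Filter.Tendsto (fun t : ℝ => vs + t • u) (nhds 0) (nhds (vs + (0:ℝ) • u)) := by
        exact (tendsto_const_nhds.add ((continuous_id.smul continuous_const).tendsto 0))
      simpa using this
    have hev := htend.eventually_mem (hUopen.mem_nhds hvs_U)
    filter_upwards [hev] with t ht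
    have hKt : vs + t • u ∈ K := hUK _ ht.1 (by
      intro i hi
      rw [inner_add_right, real_inner_smul_right, hvs_L i hi, hu i hi]
      ring)
    have := hcone _ hKt ht.2
    rw [inner_add_right, real_inner_smul_right, ← hμdef] at this
    linarith
  set p : Vr r := P c with hpdef
  have hp_L : Lmem p := hP_L c
  have hp_rat : ratVec p := hP_rat c hc_rat
  have hp_eq : ∀ u, Lmem u → (inner ℝ p u : ℝ) = μ * (inner ℝ vs u : ℝ) := by
    intro u hu
    have h1 := hP_perp c u hu
    rw [inner_sub_left] at h1
    have : (inner ℝ p u : ℝ) = (inner ℝ c u : ℝ) := by rw [hpdef] at *; linarith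
    rw [this]
    exact hLag u hu
  -- find the rational minimizer direction w
  have key : ∃ w : Vr r, ratVec w ∧ (∀ i ∈ S, 0 ≤ (inner ℝ (cs i) w : ℝ)) ∧ w ≠ 0 ∧
      (inner ℝ c w : ℝ) = μ * ‖w‖ := by
    by_cases hμ0 : μ = 0
    · -- use density of rational vectors in L near vs
      obtain ⟨δ, hδpos, hball⟩ := Metric.isOpen_iff.mp hUopen vs hvs_U
      obtain ⟨δ', hδ'pos, hδ'⟩ := Metric.continuous_iff.mp (projC_cont a m) vs δ hδpos
      obtain ⟨w₀, hw₀rat, hw₀near⟩ := exists_ratVec_near vs hδ'pos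
      have hw₀dist : dist w₀ vs < δ' := by rwa [dist_eq_norm]
      have hPw₀ : dist (P w₀) vs < δ := by
        have h2 := hδ' w₀ hw₀dist
        rw [show projC a m vs = vs from hP_fix vs hvs_L] at h2
        exact h2
      have hw_mem := hball (Metric.mem_ball.mpr hPw₀)
      set w : Vr r := P w₀ with hwdef
      have hw_L : Lmem w := hP_L w₀
      refine ⟨w, hP_rat w₀ hw₀rat, hUK w hw_mem.1 hw_L, hw_mem.2, ?_⟩
      rw [hLag w hw_L, hμ0]
      ring
    · -- p = μ • vs; take w = |μ|/μ • p
      have hu : Lmem (p - μ • vs) := hLsub _ _ hp_L (hLsmul μ vs hvs_L)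
      have hzero : (inner ℝ (p - μ • vs) (p - μ • vs) : ℝ) = 0 := by
        rw [inner_sub_left, real_inner_smul_left, hp_eq _ hu]
        ring
      have hpvs : p = μ • vs := by
        have := inner_self_eq_zero.mp hzero
        rwa [sub_eq_zero] at this
      set s : ℝ := |μ| / μ with hsdef
      have hs_rat : s ∈ Qf := by
        rcases abs_choice μ with h | h
        · rw [hsdef, h, div_self hμ0]
          exact ⟨1, by push_cast; ring⟩
        · rw [hsdef, h]
          rw [neg_div, div_self hμ0]
          exact ⟨-1, by push_cast; ring⟩
      have hsμ : s * μ = |μ| := by rw [hsdef]; field_simp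
      have habs : 0 < |μ| := abs_pos.mpr hμ0
      set w : Vr r := s • p with hwdef
      have hw_eq : w = |μ| • vs := by
        rw [hwdef, hpvs, smul_smul, hsμ]
      refine ⟨w, ratVec_smul hs_rat hp_rat, ?_, ?_, ?_⟩
      · intro i hi
        rw [hw_eq, real_inner_smul_right]
        exact mul_nonneg habs.le (hvs_K i hi)
      · rw [hw_eq]
        intro h
        rcases smul_eq_zero.mp h with h | h
        · exact habs.ne' h
        · exact hvs_ne h
      · rw [hw_eq, real_inner_smul_right, norm_smul, Real.norm_eq_abs, abs_abs, hvs_norm,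
          ← hμdef]
        ring
  obtain ⟨w, hw_rat, hw_K, hw_ne, hw_val⟩ := key
  have hw_normpos : 0 < ‖w‖ := norm_pos_iff.mpr hw_ne
  obtain ⟨lmin, d, hdpos, hld⟩ := exists_int_multiple w hw_rat
  have hiv_lmin : iv lmin = d • w := by
    ext j
    rw [hiv_apply, hld j]
    rfl
  have hlmin_ne : lmin ≠ 0 := by
    intro h
    refine hw_ne (PiLp.ext fun j => ?_)
    have := hld j
    rw [h] at this
    simp at this
    rcases this with h' | h'
    · exact absurd h' hdpos.ne'
    · exact h'
  have hlmin_mem : lmin ∈ {l : Fin r → ℤ | l ≠ 0 ∧ ∀ i ∈ S, 0 ≤ ∑ j, l j * χs i j} := by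
    refine ⟨hlmin_ne, fun i hi => ?_⟩
    have : (0:ℝ) ≤ ((∑ j, lmin j * χs i j : ℤ) : ℝ) := by
      rw [← hinner (χs i) lmin, hiv_lmin, real_inner_smul_right]
      exact mul_nonneg hdpos.le (hw_K i hi)
    exact_mod_cast this
  refine ⟨lmin, hlmin_mem, fun l hl => ?_⟩
  have hlK := hCK l hl
  have hlpos : 0 < ‖iv l‖ := norm_pos_iff.mpr hlK.2
  rw [← hinner χ lmin, ← hinner χ l, ← hnorm lmin, ← hnorm l]
  have hLHS : (inner ℝ (iv χ) (iv lmin) : ℝ) / ‖iv lmin‖ = μ := by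
    rw [← hcdef, hiv_lmin, real_inner_smul_right, norm_smul, Real.norm_eq_abs,
      abs_of_pos hdpos, hw_val]
    field_simp
  rw [← hcdef]
  rw [show (inner ℝ (iv χ) (iv l) : ℝ) = (inner ℝ c (iv l) : ℝ) by rw [hcdef]] at *
  rw [hLHS]
  rw [le_div_iff₀ hlpos]
  exact hcone (iv l) hlK.1 hlK.2
end

section
/- Let π : Y → X be a morphism of schemes and i : X → Y an open immersion with π ∘ i = id_X. Assume i is schematically dense, i.e., for every open subset U ⊆ Y the restriction map 𝒪_Y(U) → 𝒪_Y(U ∩ i(X)) is injective. Then the canonical map 𝒪_X → π_*𝒪_Y is an isomorphism; equivalently, for every open subset V ⊆ X, the ring homomorphism 𝒪_X(V) → 𝒪_Y(π^{-1}(V)) induced by π is bijective. -/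
open AlgebraicGeometry CategoryTheory

/-- **Pushforward of the structure sheaf along a retraction with schematically dense section.**
Let `p : Y → X` be a morphism of schemes and `i : X → Y` an open immersion with `p ∘ i = id`.
If `i` is schematically dense (restriction to the open image of `i` is injective on sections
over every open of `Y`), then `𝒪_X → p_*𝒪_Y` is an isomorphism, i.e. for every open `V ⊆ X`
the map `𝒪_X(V) → 𝒪_Y(p⁻¹V)` induced by `p` is bijective. -/
theorem pushforward_structure_sheaf_iso_of_schematically_dense_section
    (X Y : Scheme) (p : Y ⟶ X) (i : X ⟶ Y) [IsOpenImmersion i]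
    (hsec : i ≫ p = 𝟙 X)
    (hdense : ∀ U : Y.Opens,
      Function.Injective
        (Y.presheaf.map (homOfLE (inf_le_left : U ⊓ i.opensRange ≤ U)).op))
    (V : X.Opens) :
    Function.Bijective (p.app V) := by
  set W : Y.Opens := p ⁻¹ᵁ V ⊓ i.opensRange with hW
  have hpi : ∀ x : X, p.base (i.base x) = x := by
    intro x
    rw [show p.base (i.base x) = (i ≫ p).base x from rfl, hsec]
    rfl
  have hVW : V ≤ i ⁻¹ᵁ W := by
    intro x hx
    exact ⟨show p.base (i.base x) ∈ V by rw [hpi x]; exact hx, ⟨x, rfl⟩⟩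
  have hImg : i ''ᵁ V = W := by
    apply le_antisymm
    · rintro y ⟨x, hx, rfl⟩
      exact ⟨show p.base (i.base x) ∈ V by rw [hpi x]; exact hx, ⟨x, rfl⟩⟩
    · rintro y ⟨hy, x, rfl⟩
      have hx : p.base (i.base x) ∈ V := hy
      rw [hpi x] at hx
      exact ⟨x, hx, rfl⟩
  -- the "restrict to the dense open and pull back along `i`" map
  set j : Γ(Y, W) ⟶ Γ(X, V) := i.appLE W V hVW with hj
  have hjinj : Function.Injective j := by
    have := (i.appLE_congr (Scheme.Hom.preimage_image_eq i V).ge hImg rfl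
        (fun f => Function.Injective f)).mp ?_
    · exact this
    · rw [← Scheme.Hom.appIso_hom']
      exact ((i.appIso V).commRingCatIsoToRingEquiv).injective
  have hρinj : Function.Injective (Y.presheaf.map (homOfLE (inf_le_left :
      (p ⁻¹ᵁ V) ⊓ i.opensRange ≤ p ⁻¹ᵁ V)).op) := hdense (p ⁻¹ᵁ V)
  -- the composite `Γ(X,V) → Γ(Y,p⁻¹V) → Γ(Y,W) → Γ(X,V)` is the identity
  have hcomp : p.app V ≫ Y.presheaf.map (homOfLE (inf_le_left :
      (p ⁻¹ᵁ V) ⊓ i.opensRange ≤ p ⁻¹ᵁ V)).op ≫ j = 𝟙 Γ(X, V) := by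
    rw [hj]
    have h1 : p.app V ≫ Y.presheaf.map (homOfLE (inf_le_left :
        (p ⁻¹ᵁ V) ⊓ i.opensRange ≤ p ⁻¹ᵁ V)).op = p.appLE V W inf_le_left := rfl
    rw [← Category.assoc, h1, Scheme.Hom.appLE_comp_appLE]
    have hgen : ∀ (f : X ⟶ X) (_ : f = 𝟙 X) (e : V ≤ f ⁻¹ᵁ V),
        f.appLE V V e = 𝟙 Γ(X, V) := by
      rintro f rfl e
      rw [Scheme.Hom.appLE, Scheme.Hom.id_app]
      erw [Category.id_comp]
      exact (X.presheaf.map_id (Opposite.op V)) ▸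
        congrArg X.presheaf.map (Subsingleton.elim _ _)
    exact hgen _ hsec _
  constructor
  · intro a b hab
    have := congrArg (fun s => j (Y.presheaf.map (homOfLE (inf_le_left :
      (p ⁻¹ᵁ V) ⊓ i.opensRange ≤ p ⁻¹ᵁ V)).op s)) hab
    simpa only [← CommRingCat.comp_apply, Category.assoc, hcomp,
      CommRingCat.id_apply] using this
  · intro s
    refine ⟨j (Y.presheaf.map (homOfLE inf_le_left).op s), ?_⟩
    apply hρinj
    apply hjinj
    calc j (Y.presheaf.map (homOfLE inf_le_left).op
          (p.app V (j (Y.presheaf.map (homOfLE inf_le_left).op s))))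
        = (p.app V ≫ Y.presheaf.map (homOfLE inf_le_left).op ≫ j)
            (j (Y.presheaf.map (homOfLE inf_le_left).op s)) := by
          simp [CommRingCat.comp_apply]
      _ = j (Y.presheaf.map (homOfLE inf_le_left).op s) := by
          rw [hcomp]; rfl
end

section
/- Let k be a field, let A be a 3×3 matrix over k, and let c ∈ k with c ≠ 0. Suppose that substituting x_i ↦ ∑_j A_{ij} x_j into the polynomial x₀x₁x₂ ∈ k[x₀,x₁,x₂] yields c·x₀x₁x₂. Then A is a monomial matrix: there exist a permutation σ of {0,1,2} and nonzero scalars d₀, d₁, d₂ ∈ k such that A_{ij} = d_i if j = σ(i) and A_{ij} = 0 otherwise. -/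
open MvPolynomial

section Aux

variable {R : Type*} [CommRing R] {σ : Type*}

/-- The "set `X i := 0`" substitution kills `p` up to a multiple of `X i`. -/
private lemma X_dvd_sub_aeval [DecidableEq σ] (i : σ) (p : MvPolynomial σ R) :
    (X i : MvPolynomial σ R) ∣
      p - aeval (fun j => if j = i then 0 else X j) p := by
  induction p using MvPolynomial.induction_on with
  | C a => simp
  | add p q hp hq =>
      rw [map_add]
      have := dvd_add hp hq
      convert this using 1
      ring
  | mul_X p j hp =>
      rw [map_mul, aeval_X]
      by_cases hj : j = i
      · rw [if_pos hj, mul_zero, sub_zero, hj]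
        exact dvd_mul_left (X i) p
      · rw [if_neg hj]
        have := hp.mul_right (X j)
        convert this using 1
        ring

private lemma prime_X_mv [IsDomain R] [DecidableEq σ] (i : σ) :
    Prime (X i : MvPolynomial σ R) := by
  have key : ∀ r : MvPolynomial σ R,
      (X i ∣ r) ↔ aeval (fun j => if j = i then (0 : MvPolynomial σ R) else X j) r = 0 := by
    intro r
    constructor
    · rintro ⟨s, rfl⟩
      rw [map_mul, aeval_X, if_pos rfl, zero_mul]
    · intro h0
      have := X_dvd_sub_aeval i r
      rwa [h0, sub_zero] at this
  refine ⟨X_ne_zero i, ?_, ?_⟩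
  · intro hu
    have := hu.map (aeval (R := R) (fun j => if j = i then 0 else (X j : MvPolynomial σ R)))
    rw [aeval_X, if_pos rfl] at this
    exact not_isUnit_zero this
  · intro p q hpq
    rw [key] at hpq
    rw [map_mul] at hpq
    rcases mul_eq_zero.mp hpq with h0 | h0
    · exact Or.inl ((key p).mpr h0)
    · exact Or.inr ((key q).mpr h0)

end Aux

/-- **The stabilizer of the triangle cubic consists of monomial matrices.**
Let `A` be a `3×3` matrix over a field `k` and `c ≠ 0`.  If substituting
`xᵢ ↦ ∑ⱼ Aᵢⱼ xⱼ` into `x₀x₁x₂` yields `c·x₀x₁x₂`, then `A` is a monomial matrix: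
there are a permutation `σ` of `{0,1,2}` and nonzero scalars `d₀, d₁, d₂` with
`Aᵢⱼ = dᵢ` if `j = σ(i)` and `Aᵢⱼ = 0` otherwise. -/
theorem stabilizer_of_triangle_cubic_is_monomial
    (k : Type*) [Field k] (A : Matrix (Fin 3) (Fin 3) k) (c : k) (hc : c ≠ 0)
    (h : aeval (fun i : Fin 3 => ∑ j : Fin 3, A i j • (X j : MvPolynomial (Fin 3) k))
        (X 0 * X 1 * X 2 : MvPolynomial (Fin 3) k) =
      c • (X 0 * X 1 * X 2 : MvPolynomial (Fin 3) k)) :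
    ∃ (σ : Equiv.Perm (Fin 3)) (d : Fin 3 → k), (∀ i, d i ≠ 0) ∧
      ∀ i j, A i j = if j = σ i then d i else 0 := by
  classical
  set L : Fin 3 → MvPolynomial (Fin 3) k := fun i => ∑ j : Fin 3, A i j • X j with hLdef
  simp only [map_mul, aeval_X] at h
  -- now `h : L 0 * L 1 * L 2 = c • (X 0 * X 1 * X 2)`
  have hne : L 0 * L 1 * L 2 ≠ 0 := by
    rw [h]
    exact smul_ne_zero hc (mul_ne_zero (mul_ne_zero (X_ne_zero 0) (X_ne_zero 1)) (X_ne_zero 2))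
  have h01 := mul_ne_zero_iff.mp hne
  have h0 := mul_ne_zero_iff.mp h01.1
  have hLi : ∀ i : Fin 3, L i ≠ 0 := by
    intro i; fin_cases i
    · exact h0.1
    · exact h0.2
    · exact h01.2
  have hcoeff : ∀ i m, MvPolynomial.coeff (Finsupp.single m 1) (L i) = A i m := by
    intro i m
    rw [hLdef]
    rw [coeff_sum]
    simp only [coeff_smul, coeff_X', smul_eq_mul, mul_ite, mul_one, mul_zero,
      Finsupp.single_left_inj (one_ne_zero (α := ℕ))]
    rw [Finset.sum_ite_eq']
    simp
  have hBzero : ∀ (t i : Fin 3), (X t : MvPolynomial (Fin 3) k) ∣ L i →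
      ∀ m, m ≠ t → A i m = 0 := by
    rintro t i ⟨q, hq⟩ m hm
    have hc0 : MvPolynomial.coeff (Finsupp.single m 1) (L i) = 0 := by
      rw [hq, coeff_X_mul', if_neg]
      simpa [Finsupp.single_apply] using hm.symm
    rw [hcoeff] at hc0
    exact hc0
  have hLzero : ∀ i, (∀ m, A i m = 0) → L i = 0 := by
    intro i h0'
    rw [hLdef]
    simp [h0']
  have hdvd : ∀ j : Fin 3, ∃ i, (X j : MvPolynomial (Fin 3) k) ∣ L i := by
    intro j
    have hj : (X j : MvPolynomial (Fin 3) k) ∣ L 0 * L 1 * L 2 := by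
      rw [h, smul_eq_C_mul]
      fin_cases j
      · exact (((dvd_mul_right (X 0) (X 1)).mul_right (X 2)).mul_left _)
      · exact (((dvd_mul_left (X 1) (X 0)).mul_right (X 2)).mul_left _)
      · exact ((dvd_mul_left (X 2) _).mul_left _)
    have hp : Prime (X j : MvPolynomial (Fin 3) k) := prime_X_mv j
    rcases hp.dvd_mul.mp hj with h2 | h2
    · rcases hp.dvd_mul.mp h2 with h3 | h3
      exacts [⟨0, h3⟩, ⟨1, h3⟩]
    · exact ⟨2, h2⟩
  choose f hf using hdvd
  have hinj : Function.Injective f := by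
    intro j j' hjj
    by_contra hne'
    apply hLi (f j)
    apply hLzero
    intro m
    rcases eq_or_ne m j with hm | hm
    · rw [hm]
      exact hBzero j' (f j) (hjj ▸ hf j') j hne'
    · exact hBzero j (f j) (hf j) m hm
  have hbij : Function.Bijective f := Finite.injective_iff_bijective.mp hinj
  let e := Equiv.ofBijective f hbij
  have hX : ∀ i, (X (e.symm i) : MvPolynomial (Fin 3) k) ∣ L i := by
    intro i
    have := hf (e.symm i)
    rwa [show f (e.symm i) = i from e.apply_symm_apply i] at this
  refine ⟨e.symm, fun i => A i (e.symm i), ?_, ?_⟩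
  · intro i hdi
    apply hLi i
    apply hLzero
    intro m
    rcases eq_or_ne m (e.symm i) with rfl | hm
    · exact hdi
    · exact hBzero (e.symm i) i (hX i) m hm
  · intro i j
    by_cases hj : j = e.symm i
    · rw [if_pos hj, hj]
    · rw [if_neg hj]
      exact hBzero (e.symm i) i (hX i) j hj
end

section
/- Let k be a field. Define the k-linear map Φ from 3×3 matrices over k to k[x₀,x₁,x₂] by Φ(M) = ∑_{i=0}^{2} (∑_{j=0}^{2} M_{ij} x_j) · ∏_{l ≠ i} x_l. Then the image under Φ of the subspace of trace-zero matrices equals the k-linear span of the six monomials x₀²x₁, x₀²x₂, x₀x₁², x₁²x₂, x₀x₂², x₁x₂². -/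
open MvPolynomial

theorem phi_key_identity
    (k : Type*) [Field k]
    (Φ : Matrix (Fin 3) (Fin 3) k → MvPolynomial (Fin 3) k)
    (hΦ : ∀ M, Φ M = ∑ i : Fin 3,
      (∑ j : Fin 3, M i j • (X j : MvPolynomial (Fin 3) k)) *
        ∏ l ∈ ({i}ᶜ : Finset (Fin 3)), X l) (M : Matrix (Fin 3) (Fin 3) k) :
    Φ M = Matrix.trace M • (X 0 * X 1 * X 2)
      + M 2 0 • (X 0 ^ 2 * X 1) + M 1 0 • (X 0 ^ 2 * X 2)
      + M 2 1 • (X 0 * X 1 ^ 2) + M 0 1 • (X 1 ^ 2 * X 2)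
      + M 1 2 • (X 0 * X 2 ^ 2) + M 0 2 • (X 1 * X 2 ^ 2) := by
  have h0 : ({(0:Fin 3)}ᶜ : Finset (Fin 3)) = {1, 2} := by decide
  have h1 : ({(1:Fin 3)}ᶜ : Finset (Fin 3)) = {0, 2} := by decide
  have h2 : ({(2:Fin 3)}ᶜ : Finset (Fin 3)) = {0, 1} := by decide
  rw [hΦ]
  simp only [Fin.sum_univ_three, h0, h1, h2, Matrix.trace, Matrix.diag, smul_eq_C_mul]
  rw [Finset.prod_insert (by decide), Finset.prod_singleton,
      Finset.prod_insert (by decide), Finset.prod_singleton,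
      Finset.prod_insert (by decide), Finset.prod_singleton]
  simp only [map_add]
  ring

noncomputable def orbitDiffL (k : Type*) [Field k] :
    Matrix (Fin 3) (Fin 3) k →ₗ[k] MvPolynomial (Fin 3) k where
  toFun M := Matrix.trace M • (X 0 * X 1 * X 2)
      + M 2 0 • (X 0 ^ 2 * X 1) + M 1 0 • (X 0 ^ 2 * X 2)
      + M 2 1 • (X 0 * X 1 ^ 2) + M 0 1 • (X 1 ^ 2 * X 2)
      + M 1 2 • (X 0 * X 2 ^ 2) + M 0 2 • (X 1 * X 2 ^ 2)
  map_add' M N := by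
    simp only [Matrix.trace, Matrix.diag, Fin.sum_univ_three, Matrix.add_apply]
    module
  map_smul' c M := by
    simp only [Matrix.trace, Matrix.diag, Fin.sum_univ_three, Matrix.smul_apply,
      smul_eq_mul, RingHom.id_apply]
    module

theorem orbitDiffL_apply (k : Type*) [Field k] (M : Matrix (Fin 3) (Fin 3) k) :
    orbitDiffL k M = Matrix.trace M • (X 0 * X 1 * X 2)
      + M 2 0 • (X 0 ^ 2 * X 1) + M 1 0 • (X 0 ^ 2 * X 2)
      + M 2 1 • (X 0 * X 1 ^ 2) + M 0 1 • (X 1 ^ 2 * X 2)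
      + M 1 2 • (X 0 * X 2 ^ 2) + M 0 2 • (X 1 * X 2 ^ 2) := rfl

/-- **Tangent space of the `PGL₃`-orbit of the triangle cubic.**
Define `Φ(M) = ∑ᵢ (∑ⱼ Mᵢⱼ xⱼ) · ∏_{l ≠ i} x_l` on `3×3` matrices.  The image under `Φ` of the
trace-zero matrices equals the `k`-linear span of the six monomials
`x₀²x₁, x₀²x₂, x₀x₁², x₁²x₂, x₀x₂², x₁x₂²`. -/
theorem image_of_traceless_matrices_under_orbit_differential
    (k : Type*) [Field k]
    (Φ : Matrix (Fin 3) (Fin 3) k → MvPolynomial (Fin 3) k)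
    (hΦ : ∀ M, Φ M = ∑ i : Fin 3,
      (∑ j : Fin 3, M i j • (X j : MvPolynomial (Fin 3) k)) *
        ∏ l ∈ ({i}ᶜ : Finset (Fin 3)), X l) :
    Φ '' {M | Matrix.trace M = 0} =
      (Submodule.span k
        ({X 0 ^ 2 * X 1, X 0 ^ 2 * X 2, X 0 * X 1 ^ 2,
          X 1 ^ 2 * X 2, X 0 * X 2 ^ 2, X 1 * X 2 ^ 2} :
          Set (MvPolynomial (Fin 3) k)) : Set (MvPolynomial (Fin 3) k)) := by
  set S : Set (MvPolynomial (Fin 3) k) :=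
    {X 0 ^ 2 * X 1, X 0 ^ 2 * X 2, X 0 * X 1 ^ 2,
      X 1 ^ 2 * X 2, X 0 * X 2 ^ 2, X 1 * X 2 ^ 2} with hS
  set T : Submodule k (Matrix (Fin 3) (Fin 3) k) :=
    LinearMap.ker (Matrix.traceLinearMap (Fin 3) k k) with hT
  have hset : {M : Matrix (Fin 3) (Fin 3) k | Matrix.trace M = 0} = (T : Set _) := by
    ext M; simp [hT, LinearMap.mem_ker]
  have hfun : ∀ M ∈ (T : Set _), Φ M = orbitDiffL k M := by
    intro M _
    rw [phi_key_identity k Φ hΦ M, orbitDiffL_apply]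
  have himg : Φ '' {M | Matrix.trace M = 0} = ↑(T.map (orbitDiffL k)) := by
    rw [hset]
    exact (Set.image_congr hfun).trans (Submodule.map_coe _ _).symm
  have m1 : X 0 ^ 2 * X 1 ∈ S := Set.mem_insert _ _
  have m2 : X 0 ^ 2 * X 2 ∈ S := Set.mem_insert_of_mem _ (Set.mem_insert _ _)
  have m3 : X 0 * X 1 ^ 2 ∈ S :=
    Set.mem_insert_of_mem _ (Set.mem_insert_of_mem _ (Set.mem_insert _ _))
  have m4 : X 1 ^ 2 * X 2 ∈ S :=
    Set.mem_insert_of_mem _ (Set.mem_insert_of_mem _ (Set.mem_insert_of_mem _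
      (Set.mem_insert _ _)))
  have m5 : X 0 * X 2 ^ 2 ∈ S :=
    Set.mem_insert_of_mem _ (Set.mem_insert_of_mem _ (Set.mem_insert_of_mem _
      (Set.mem_insert_of_mem _ (Set.mem_insert _ _))))
  have m6 : X 1 * X 2 ^ 2 ∈ S :=
    Set.mem_insert_of_mem _ (Set.mem_insert_of_mem _ (Set.mem_insert_of_mem _
      (Set.mem_insert_of_mem _ (Set.mem_insert_of_mem _ rfl))))
  suffices h : T.map (orbitDiffL k) = Submodule.span k S by rw [himg, h]
  apply le_antisymm
  · rintro p hp
    rw [Submodule.mem_map] at hp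
    obtain ⟨M, hM, rfl⟩ := hp
    have htr : Matrix.trace M = 0 := hM
    rw [orbitDiffL_apply, htr, zero_smul, zero_add]
    exact Submodule.add_mem _ (Submodule.add_mem _ (Submodule.add_mem _
      (Submodule.add_mem _ (Submodule.add_mem _
        (Submodule.smul_mem _ _ (Submodule.subset_span m1))
        (Submodule.smul_mem _ _ (Submodule.subset_span m2)))
        (Submodule.smul_mem _ _ (Submodule.subset_span m3)))
        (Submodule.smul_mem _ _ (Submodule.subset_span m4)))
        (Submodule.smul_mem _ _ (Submodule.subset_span m5)))
      (Submodule.smul_mem _ _ (Submodule.subset_span m6))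
  · rw [Submodule.span_le]
    intro p hp
    have gtr : ∀ (i j : Fin 3), i ≠ j →
        Matrix.trace (Matrix.single i j (1:k)) = 0 := by
      intro i j hij
      have hd : ∀ l : Fin 3, Matrix.single i j (1:k) l l = 0 := fun l =>
        Matrix.single_apply_of_ne _ _ _ _ _ (by rintro ⟨rfl, rfl⟩; exact hij rfl)
      rw [Matrix.trace, Fin.sum_univ_three]
      simp [Matrix.diag, hd]
    have gen : ∀ (i j : Fin 3), i ≠ j → (Matrix.single i j (1:k)) ∈ T :=
      fun i j hij => gtr i j hij
    have entry : ∀ (i j a b : Fin 3), Matrix.single i j (1:k) a b =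
        if i = a ∧ j = b then 1 else 0 := by
      intro i j a b; rfl
    rw [hS] at hp
    simp only [Set.mem_insert_iff, Set.mem_singleton_iff] at hp
    rcases hp with rfl | rfl | rfl | rfl | rfl | rfl
    · exact Submodule.mem_map.mpr ⟨Matrix.single 2 0 1, gen 2 0 (by decide), by
        rw [orbitDiffL_apply, gtr 2 0 (by decide)]
        simp [entry]⟩
    · exact Submodule.mem_map.mpr ⟨Matrix.single 1 0 1, gen 1 0 (by decide), by
        rw [orbitDiffL_apply, gtr 1 0 (by decide)]
        simp [entry]⟩
    · exact Submodule.mem_map.mpr ⟨Matrix.single 2 1 1, gen 2 1 (by decide), by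
        rw [orbitDiffL_apply, gtr 2 1 (by decide)]
        simp [entry]⟩
    · exact Submodule.mem_map.mpr ⟨Matrix.single 0 1 1, gen 0 1 (by decide), by
        rw [orbitDiffL_apply, gtr 0 1 (by decide)]
        simp [entry]⟩
    · exact Submodule.mem_map.mpr ⟨Matrix.single 1 2 1, gen 1 2 (by decide), by
        rw [orbitDiffL_apply, gtr 1 2 (by decide)]
        simp [entry]⟩
    · exact Submodule.mem_map.mpr ⟨Matrix.single 0 2 1, gen 0 2 (by decide), by
        rw [orbitDiffL_apply, gtr 0 2 (by decide)]
        simp [entry]⟩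
end

section
/- Let k be a field. Define the k-linear map Φ from 3×3 matrices over k to k[x₀,x₁,x₂] by Φ(M) = ∑_{i=0}^{2} (∑_{j=0}^{2} M_{ij} x_j) · ∏_{l ≠ i} x_l. Then the space of homogeneous polynomials of degree 3 in k[x₀,x₁,x₂] is the internal direct sum of the image of Φ and the k-linear span of x₀³, x₁³, x₂³: these two subspaces intersect only in 0 and together span all homogeneous cubic forms. -/
open MvPolynomial

section CubicAux

variable {k : Type*} [Field k]

/-- Explicit expansion of the map `Φ`. -/
lemma cubicPhi_exp (Φ : Matrix (Fin 3) (Fin 3) k → MvPolynomial (Fin 3) k)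
    (hΦ : ∀ M, Φ M = ∑ i : Fin 3,
      (∑ j : Fin 3, M i j • (X j : MvPolynomial (Fin 3) k)) *
        ∏ l ∈ ({i}ᶜ : Finset (Fin 3)), X l) :
    ∀ M, Φ M =
      (C (M 0 0) * X 0 + C (M 0 1) * X 1 + C (M 0 2) * X 2) * (X 1 * X 2) +
      ((C (M 1 0) * X 0 + C (M 1 1) * X 1 + C (M 1 2) * X 2) * (X 0 * X 2) +
       (C (M 2 0) * X 0 + C (M 2 1) * X 1 + C (M 2 2) * X 2) * (X 0 * X 1)) := by
  intro M
  have hc0 : ({(0:Fin 3)}ᶜ : Finset (Fin 3)) = {1, 2} := by decide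
  have hc1 : ({(1:Fin 3)}ᶜ : Finset (Fin 3)) = {0, 2} := by decide
  have hc2 : ({(2:Fin 3)}ᶜ : Finset (Fin 3)) = {0, 1} := by decide
  have hp0 : ∏ l ∈ ({1, 2} : Finset (Fin 3)), (X l : MvPolynomial (Fin 3) k) = X 1 * X 2 :=
    Finset.prod_pair (by decide)
  have hp1 : ∏ l ∈ ({0, 2} : Finset (Fin 3)), (X l : MvPolynomial (Fin 3) k) = X 0 * X 2 :=
    Finset.prod_pair (by decide)
  have hp2 : ∏ l ∈ ({0, 1} : Finset (Fin 3)), (X l : MvPolynomial (Fin 3) k) = X 0 * X 1 :=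
    Finset.prod_pair (by decide)
  rw [hΦ, Fin.sum_univ_three, hc0, hc1, hc2, hp0, hp1, hp2]
  simp only [Fin.sum_univ_three, smul_eq_C_mul]
  ring

/-- Each value of `Φ` is homogeneous of degree 3. -/
lemma cubicPhi_homog (Φ : Matrix (Fin 3) (Fin 3) k → MvPolynomial (Fin 3) k)
    (hexp : ∀ M, Φ M =
      (C (M 0 0) * X 0 + C (M 0 1) * X 1 + C (M 0 2) * X 2) * (X 1 * X 2) +
      ((C (M 1 0) * X 0 + C (M 1 1) * X 1 + C (M 1 2) * X 2) * (X 0 * X 2) +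
       (C (M 2 0) * X 0 + C (M 2 1) * X 1 + C (M 2 2) * X 2) * (X 0 * X 1))) :
    ∀ M, Φ M ∈ homogeneousSubmodule (Fin 3) k 3 := by
  intro M
  rw [mem_homogeneousSubmodule, hexp]
  have h1 : ∀ (a b c : k), IsHomogeneous
      (C a * X 0 + C b * X 1 + C c * (X 2 : MvPolynomial (Fin 3) k)) 1 := by
    intro a b c
    have := (((isHomogeneous_C (Fin 3) a).mul (isHomogeneous_X k 0)).add
      ((isHomogeneous_C (Fin 3) b).mul (isHomogeneous_X k 1))).add
      ((isHomogeneous_C (Fin 3) c).mul (isHomogeneous_X k 2))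
    simpa using this
  have h2 : ∀ (i j : Fin 3), IsHomogeneous ((X i : MvPolynomial (Fin 3) k) * X j) 2 :=
    fun i j => (isHomogeneous_X k i).mul (isHomogeneous_X k j)
  have := (((h1 (M 0 0) (M 0 1) (M 0 2)).mul (h2 1 2)).add
    (((h1 (M 1 0) (M 1 1) (M 1 2)).mul (h2 0 2)).add
     ((h1 (M 2 0) (M 2 1) (M 2 2)).mul (h2 0 1))))
  simpa using this

/-- Evaluation at a standard unit vector kills the image of `Φ`. -/
lemma cubicPhi_eval (Φ : Matrix (Fin 3) (Fin 3) k → MvPolynomial (Fin 3) k)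
    (hexp : ∀ M, Φ M =
      (C (M 0 0) * X 0 + C (M 0 1) * X 1 + C (M 0 2) * X 2) * (X 1 * X 2) +
      ((C (M 1 0) * X 0 + C (M 1 1) * X 1 + C (M 1 2) * X 2) * (X 0 * X 2) +
       (C (M 2 0) * X 0 + C (M 2 1) * X 1 + C (M 2 2) * X 2) * (X 0 * X 1))) :
    ∀ (M : Matrix (Fin 3) (Fin 3) k) (i : Fin 3),
      eval (fun j : Fin 3 => if j = i then (1:k) else 0) (Φ M) = 0 := by
  intro M i
  rw [hexp]
  fin_cases i <;> simp

/-- The intersection of the image of `Φ` with the span of the cubes is trivial. -/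
lemma cubicPhi_inter (Φ : Matrix (Fin 3) (Fin 3) k → MvPolynomial (Fin 3) k)
    (hexp : ∀ M, Φ M =
      (C (M 0 0) * X 0 + C (M 0 1) * X 1 + C (M 0 2) * X 2) * (X 1 * X 2) +
      ((C (M 1 0) * X 0 + C (M 1 1) * X 1 + C (M 1 2) * X 2) * (X 0 * X 2) +
       (C (M 2 0) * X 0 + C (M 2 1) * X 1 + C (M 2 2) * X 2) * (X 0 * X 1))) :
    Set.range Φ ∩
        (Submodule.span k ({X 0 ^ 3, X 1 ^ 3, X 2 ^ 3} : Set (MvPolynomial (Fin 3) k)) :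
          Set (MvPolynomial (Fin 3) k)) = {0} := by
  have hev := cubicPhi_eval Φ hexp
  ext x
  simp only [Set.mem_inter_iff, Set.mem_singleton_iff, SetLike.mem_coe]
  constructor
  · rintro ⟨⟨M, rfl⟩, hx⟩
    rw [show ({X 0 ^ 3, X 1 ^ 3, X 2 ^ 3} : Set (MvPolynomial (Fin 3) k)) =
        insert (X 0 ^ 3) (insert (X 1 ^ 3) {X 2 ^ 3}) from rfl,
      Submodule.mem_span_insert] at hx
    obtain ⟨a, z, hz, hxz⟩ := hx
    rw [Submodule.mem_span_insert] at hz
    obtain ⟨b, w, hw, hzw⟩ := hz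
    rw [Submodule.mem_span_singleton] at hw
    obtain ⟨c, rfl⟩ := hw
    rw [hzw] at hxz
    have key : ∀ i : Fin 3,
        eval (fun j : Fin 3 => if j = i then (1:k) else 0)
          (a • X 0 ^ 3 + (b • X 1 ^ 3 + c • X 2 ^ 3) : MvPolynomial (Fin 3) k) = 0 := by
      intro i
      rw [← hxz]; exact hev M i
    have ha := key 0
    have hb := key 1
    have hc := key 2
    simp [smul_eq_C_mul] at ha hb hc
    rw [hxz, ha, hb, hc]
    simp
  · rintro rfl
    refine ⟨⟨0, ?_⟩, Submodule.zero_mem _⟩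
    rw [hexp]; simp

/-- Every monomial `X0^a X1^b X2^c` with `a+b+c = 3` lies in the image of `Φ` together
with the span of the cubes. -/
lemma cubicPhi_monomial_mem (Φ : Matrix (Fin 3) (Fin 3) k → MvPolynomial (Fin 3) k)
    (hexp : ∀ M, Φ M =
      (C (M 0 0) * X 0 + C (M 0 1) * X 1 + C (M 0 2) * X 2) * (X 1 * X 2) +
      ((C (M 1 0) * X 0 + C (M 1 1) * X 1 + C (M 1 2) * X 2) * (X 0 * X 2) +
       (C (M 2 0) * X 0 + C (M 2 1) * X 1 + C (M 2 2) * X 2) * (X 0 * X 1)))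
    (S : Submodule k (MvPolynomial (Fin 3) k))
    (himg : ∀ M, Φ M ∈ S)
    (hcsp0 : ((X 0 : MvPolynomial (Fin 3) k) ^ 3) ∈ S)
    (hcsp1 : ((X 1 : MvPolynomial (Fin 3) k) ^ 3) ∈ S)
    (hcsp2 : ((X 2 : MvPolynomial (Fin 3) k) ^ 3) ∈ S)
    (a b c : ℕ) (habc : a + b + c = 3) :
    (X 0 ^ a * X 1 ^ b * X 2 ^ c : MvPolynomial (Fin 3) k) ∈ S := by
  have himg' : ∀ r : MvPolynomial (Fin 3) k, (∃ M, Φ M = r) → r ∈ S := by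
    rintro r ⟨M, rfl⟩; exact himg M
  have ha : a ≤ 3 := by omega
  have hb : b ≤ 3 := by omega
  have hc : c ≤ 3 := by omega
  interval_cases a <;> interval_cases b <;> interval_cases c <;> try omega
  · simpa using hcsp2
  · refine himg' _ ⟨Matrix.single 0 2 1, ?_⟩
    rw [hexp]; simp [Matrix.single]; ring
  · refine himg' _ ⟨Matrix.single 0 1 1, ?_⟩
    rw [hexp]; simp [Matrix.single]; ring
  · simpa using hcsp1
  · refine himg' _ ⟨Matrix.single 1 2 1, ?_⟩
    rw [hexp]; simp [Matrix.single]; ring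
  · refine himg' _ ⟨Matrix.single 0 0 1, ?_⟩
    rw [hexp]; simp [Matrix.single]; ring
  · refine himg' _ ⟨Matrix.single 2 1 1, ?_⟩
    rw [hexp]; simp [Matrix.single]; ring
  · refine himg' _ ⟨Matrix.single 1 0 1, ?_⟩
    rw [hexp]; simp [Matrix.single]; ring
  · refine himg' _ ⟨Matrix.single 2 0 1, ?_⟩
    rw [hexp]; simp [Matrix.single]; ring
  · simpa using hcsp0

/-- Any homogeneous cubic lies in a submodule containing the image of `Φ` and the cubes. -/
lemma cubicPhi_span (Φ : Matrix (Fin 3) (Fin 3) k → MvPolynomial (Fin 3) k)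
    (hexp : ∀ M, Φ M =
      (C (M 0 0) * X 0 + C (M 0 1) * X 1 + C (M 0 2) * X 2) * (X 1 * X 2) +
      ((C (M 1 0) * X 0 + C (M 1 1) * X 1 + C (M 1 2) * X 2) * (X 0 * X 2) +
       (C (M 2 0) * X 0 + C (M 2 1) * X 1 + C (M 2 2) * X 2) * (X 0 * X 1)))
    (S : Submodule k (MvPolynomial (Fin 3) k))
    (himg : ∀ M, Φ M ∈ S)
    (hcsp0 : ((X 0 : MvPolynomial (Fin 3) k) ^ 3) ∈ S)
    (hcsp1 : ((X 1 : MvPolynomial (Fin 3) k) ^ 3) ∈ S)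
    (hcsp2 : ((X 2 : MvPolynomial (Fin 3) k) ^ 3) ∈ S)
    (p : MvPolynomial (Fin 3) k) (hp : p.IsHomogeneous 3) : p ∈ S := by
  rw [← support_sum_monomial_coeff p]
  refine Submodule.sum_mem _ ?_
  intro d hd
  have h3 : Finsupp.weight 1 d = 3 := hp (mem_support_iff.mp hd)
  have hdeg : d 0 + d 1 + d 2 = 3 := by
    rw [Finsupp.weight_apply, Finsupp.sum_fintype _ _ (by simp), Fin.sum_univ_three] at h3
    simpa using h3
  have hmono : (monomial d) (coeff d p) =
      coeff d p • (X 0 ^ d 0 * X 1 ^ d 1 * X 2 ^ d 2 : MvPolynomial (Fin 3) k) := by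
    rw [monomial_eq, Finsupp.prod_fintype _ _ (fun i => pow_zero _), Fin.prod_univ_three,
      smul_eq_C_mul]
  rw [hmono]
  exact Submodule.smul_mem _ _
    (cubicPhi_monomial_mem Φ hexp S himg hcsp0 hcsp1 hcsp2 _ _ _ hdeg)

end CubicAux

/-- **A Luna slice for plane cubics at the triangle cubic.**
Define `Φ(M) = ∑ᵢ (∑ⱼ Mᵢⱼ xⱼ) · ∏_{l ≠ i} x_l` on `3×3` matrices.  The space of homogeneous
cubic forms in `k[x₀,x₁,x₂]` is the internal direct sum of the image of `Φ` and the
`k`-linear span of `x₀³, x₁³, x₂³`: both are contained in the cubic forms, they intersect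
only in `0`, and together they span all homogeneous cubic forms. -/
theorem cubic_forms_direct_sum_orbit_image_and_cubes
    (k : Type*) [Field k]
    (Φ : Matrix (Fin 3) (Fin 3) k → MvPolynomial (Fin 3) k)
    (hΦ : ∀ M, Φ M = ∑ i : Fin 3,
      (∑ j : Fin 3, M i j • (X j : MvPolynomial (Fin 3) k)) *
        ∏ l ∈ ({i}ᶜ : Finset (Fin 3)), X l) :
    (∀ M, Φ M ∈ homogeneousSubmodule (Fin 3) k 3) ∧
    (({X 0 ^ 3, X 1 ^ 3, X 2 ^ 3} : Set (MvPolynomial (Fin 3) k)) ⊆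
      (homogeneousSubmodule (Fin 3) k 3 : Set (MvPolynomial (Fin 3) k))) ∧
    (Set.range Φ ∩
        (Submodule.span k ({X 0 ^ 3, X 1 ^ 3, X 2 ^ 3} : Set (MvPolynomial (Fin 3) k)) :
          Set (MvPolynomial (Fin 3) k)) = {0}) ∧
    (∀ p ∈ homogeneousSubmodule (Fin 3) k 3,
      ∃ (M : Matrix (Fin 3) (Fin 3) k) (q : MvPolynomial (Fin 3) k),
        q ∈ Submodule.span k ({X 0 ^ 3, X 1 ^ 3, X 2 ^ 3} : Set (MvPolynomial (Fin 3) k)) ∧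
        p = Φ M + q) := by
  have hexp := cubicPhi_exp Φ hΦ
  have hcube : ∀ i : Fin 3, ((X i : MvPolynomial (Fin 3) k) ^ 3).IsHomogeneous 3 := by
    intro i
    simpa using (isHomogeneous_X k i).pow 3
  have part2 : ({X 0 ^ 3, X 1 ^ 3, X 2 ^ 3} : Set (MvPolynomial (Fin 3) k)) ⊆
      (homogeneousSubmodule (Fin 3) k 3 : Set (MvPolynomial (Fin 3) k)) := by
    rintro x (rfl | rfl | rfl)
    exacts [hcube 0, hcube 1, hcube 2]
  refine ⟨cubicPhi_homog Φ hexp, part2, cubicPhi_inter Φ hexp, ?_⟩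
  intro p hp
  -- the submodule generated by the image of `Φ` and the span of the cubes
  set T : Submodule k (MvPolynomial (Fin 3) k) :=
    Submodule.span k ({X 0 ^ 3, X 1 ^ 3, X 2 ^ 3} : Set (MvPolynomial (Fin 3) k)) with hT
  let S : Submodule k (MvPolynomial (Fin 3) k) :=
    { carrier := {r | ∃ M q, q ∈ T ∧ r = Φ M + q}
      add_mem' := by
        rintro r s ⟨M, q, hq, rfl⟩ ⟨N, w, hw, rfl⟩
        refine ⟨M + N, q + w, T.add_mem hq hw, ?_⟩
        rw [hexp, hexp, hexp]
        simp only [Matrix.add_apply, map_add]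
        ring
      zero_mem' := by
        refine ⟨0, 0, T.zero_mem, ?_⟩
        rw [hexp]; simp
      smul_mem' := by
        rintro c r ⟨M, q, hq, rfl⟩
        refine ⟨c • M, c • q, T.smul_mem c hq, ?_⟩
        rw [hexp, hexp, smul_add, smul_eq_C_mul]
        simp only [Matrix.smul_apply, smul_eq_mul, map_mul, smul_eq_C_mul]
        ring }
  have himg : ∀ M, Φ M ∈ S := by
    intro M
    exact ⟨M, 0, T.zero_mem, by rw [add_zero]⟩
  have hzero : ∀ q ∈ T, q ∈ S := by
    intro q hq
    refine ⟨0, q, hq, ?_⟩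
    rw [hexp]; simp
  have hcsp0 : ((X 0 : MvPolynomial (Fin 3) k) ^ 3) ∈ S :=
    hzero _ (Submodule.subset_span (Set.mem_insert _ _))
  have hcsp1 : ((X 1 : MvPolynomial (Fin 3) k) ^ 3) ∈ S :=
    hzero _ (Submodule.subset_span (Set.mem_insert_of_mem _ (Set.mem_insert _ _)))
  have hcsp2 : ((X 2 : MvPolynomial (Fin 3) k) ^ 3) ∈ S :=
    hzero _ (Submodule.subset_span (Set.mem_insert_of_mem _ (Set.mem_insert_of_mem _ rfl)))
  have key : p ∈ S := cubicPhi_span Φ hexp S himg hcsp0 hcsp1 hcsp2 p hp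
  obtain ⟨M, q, hq, hpq⟩ := key
  exact ⟨M, q, hq, hpq⟩
end

section
/- Let k be a field, and consider the action of the semidirect product k^× ⋊ ℤ/2 on k² in which t ∈ k^× acts by t·(a,b) = (ta, t^{-1}b) and the nontrivial element of ℤ/2 acts by swapping the two coordinates (the semidirect product is formed with respect to the inversion action of ℤ/2 on k^×, so that conjugating the scaling by t by the swap gives the scaling by t^{-1}). Then for a point (a,b) ∈ k², the stabilizer of (a,b) in k^× ⋊ ℤ/2 is trivial if and only if exactly one of a and b is zero; consequently, the set of points of k² with trivial stabilizer equals { (a,b) : ab = 0 } \ {(0,0)}. -/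
/-- **The locus with trivial stabilizer for the `𝔾ₘ ⋊ μ₂`-action on `𝔸²` is not open.**
Consider the action of `kˣ ⋊ ℤ/2` on `k²` where `t` acts by `(a,b) ↦ (ta, t⁻¹b)` and the
nontrivial element of `ℤ/2` swaps the coordinates (elements are encoded as pairs
`(t, ε) ∈ kˣ × Bool`, acting by first swapping when `ε = true` and then scaling).
Then `(a,b)` has trivial stabilizer iff exactly one of `a` and `b` is zero, so the set of
points with trivial stabilizer is `{(a,b) : ab = 0} \ {(0,0)}`. -/
theorem trivial_stabilizer_locus_for_Gm_semidirect_mu2_action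
    (k : Type*) [Field k]
    (act : (kˣ × Bool) → (k × k) → (k × k))
    (hactf : ∀ (t : kˣ) (a b : k), act (t, false) (a, b) = ((t : k) * a, ((t : k))⁻¹ * b))
    (hactt : ∀ (t : kˣ) (a b : k), act (t, true) (a, b) = ((t : k) * b, ((t : k))⁻¹ * a)) :
    (∀ a b : k,
      ({g : kˣ × Bool | act g (a, b) = (a, b)} = {(1, false)}) ↔
        ((a = 0 ∧ b ≠ 0) ∨ (a ≠ 0 ∧ b = 0))) ∧
    {p : k × k | {g : kˣ × Bool | act g p = p} = {(1, false)}} =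
      {p : k × k | p.1 * p.2 = 0} \ {(0, 0)} := by
  have key : ∀ a b : k,
      ({g : kˣ × Bool | act g (a, b) = (a, b)} = {(1, false)}) ↔
        ((a = 0 ∧ b ≠ 0) ∨ (a ≠ 0 ∧ b = 0)) := by
    intro a b
    constructor
    · intro h
      by_contra hc
      push_neg at hc
      rcases eq_or_ne a 0 with ha | ha
      · have hb : b = 0 := hc.1 ha
        have hmem : ((1 : kˣ), true) ∈ {g : kˣ × Bool | act g (a, b) = (a, b)} := by
          simp [Set.mem_setOf_eq, hactt, ha, hb]
        rw [h] at hmem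
        simp at hmem
      · have hb : b ≠ 0 := hc.2 ha
        set t : kˣ := Units.mk0 (a * b⁻¹) (by
          exact mul_ne_zero ha (inv_ne_zero hb)) with ht
        have hmem : (t, true) ∈ {g : kˣ × Bool | act g (a, b) = (a, b)} := by
          simp only [Set.mem_setOf_eq, hactt, ht, Units.val_mk0]
          refine Prod.ext ?_ ?_ <;> simp <;> field_simp
        rw [h] at hmem
        simp at hmem
    · rintro (⟨ha, hb⟩ | ⟨ha, hb⟩)
      · ext ⟨t, ε⟩
        simp only [Set.mem_setOf_eq, Set.mem_singleton_iff, Prod.mk.injEq]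
        cases ε
        · rw [hactf, ha, Prod.mk.injEq]
          constructor
          · rintro ⟨-, h2⟩
            refine ⟨Units.ext ?_, rfl⟩
            have : ((t : k)⁻¹) = 1 := by
              have h2' : (t : k)⁻¹ * b = 1 * b := by simpa using h2
              exact mul_right_cancel₀ hb h2'
            have ht1 : (t : k) = 1 := by
              have := congrArg (fun x => x⁻¹) this
              simpa using this
            simpa using ht1
          · rintro ⟨h1, -⟩
            subst h1
            simp
        · rw [hactt, ha, Prod.mk.injEq]
          constructor
          · rintro ⟨h1, h2⟩
            exfalso
            exact hb (by simpa using h1.symm)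
          · rintro ⟨-, h⟩
            exact absurd h (by simp)
      · ext ⟨t, ε⟩
        simp only [Set.mem_setOf_eq, Set.mem_singleton_iff, Prod.mk.injEq]
        cases ε
        · rw [hactf, hb, Prod.mk.injEq]
          constructor
          · rintro ⟨h1, -⟩
            refine ⟨Units.ext ?_, rfl⟩
            have := mul_right_cancel₀ ha (by simpa using h1 : (t : k) * a = 1 * a)
            simpa using this
          · rintro ⟨h1, -⟩
            subst h1
            simp
        · rw [hactt, hb, Prod.mk.injEq]
          constructor
          · rintro ⟨h1, h2⟩
            exfalso
            apply ha
            have : (t : k) * 0 = a := h1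
            simpa using this.symm
          · rintro ⟨-, h⟩
            exact absurd h (by simp)
  refine ⟨key, ?_⟩
  ext ⟨a, b⟩
  simp only [Set.mem_setOf_eq, Set.mem_diff, Set.mem_singleton_iff, Prod.mk.injEq, key,
    mul_eq_zero]
  constructor
  · rintro (⟨ha, hb⟩ | ⟨ha, hb⟩) <;> tauto
  · rintro ⟨h1 | h2, h3⟩ <;> tauto
end
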